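/- arXiv:1307.6273 — 5 statements merged into one kernel-verified Lean document; each statement's English description precedes it below -/
import Mathlib

section
/- For all u, v ∈ ℝ and all z in the complex upper half-plane, the Siegel phi-function satisfies φ(u, v+1, z) = −e^{πiu}·φ(u, v, z). -/
open Complex Real

/-- The Siegel phi-function: for `u v : ℝ` and `z` in the upper half-plane, with
`γ = u·z + v`,
`φ(u,v,z) = -i·e^{πiz/6}·e^{πiuγ}·(e^{πiγ} - e^{-πiγ})·∏_{n≥1}(1-e^{2πi(nz+γ)})(1-e^{2πi(nz-γ)})`. -/
noncomputable def siegelPhi (u v : ℝ) (z : ℂ) : ℂ :=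
  -I * Complex.exp ((π : ℂ) * I * z / 6) *
    Complex.exp ((π : ℂ) * I * (u : ℂ) * ((u : ℂ) * z + (v : ℂ))) *
    (Complex.exp ((π : ℂ) * I * ((u : ℂ) * z + (v : ℂ))) -
      Complex.exp (-((π : ℂ) * I * ((u : ℂ) * z + (v : ℂ))))) *
    ∏' n : ℕ+,
      (1 - Complex.exp (2 * (π : ℂ) * I * ((n : ℂ) * z + ((u : ℂ) * z + (v : ℂ))))) *
      (1 - Complex.exp (2 * (π : ℂ) * I * ((n : ℂ) * z - ((u : ℂ) * z + (v : ℂ)))))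

/-- `φ(u, v+1, z) = -e^{πiu}·φ(u, v, z)`. -/
theorem siegelPhi_v_add_one (u v : ℝ) (z : ℂ) (hz : 0 < z.im) :
    siegelPhi u (v + 1) z = -Complex.exp ((π : ℂ) * I * (u : ℂ)) * siegelPhi u v z := by
  unfold siegelPhi
  push_cast
  have hprod : (∏' n : ℕ+,
      (1 - Complex.exp (2 * (π : ℂ) * I * ((n : ℂ) * z + ((u : ℂ) * z + ((v : ℂ) + 1))))) *
      (1 - Complex.exp (2 * (π : ℂ) * I * ((n : ℂ) * z - ((u : ℂ) * z + ((v : ℂ) + 1)))))) =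
      ∏' n : ℕ+,
      (1 - Complex.exp (2 * (π : ℂ) * I * ((n : ℂ) * z + ((u : ℂ) * z + (v : ℂ))))) *
      (1 - Complex.exp (2 * (π : ℂ) * I * ((n : ℂ) * z - ((u : ℂ) * z + (v : ℂ))))) := by
    apply tprod_congr
    intro n
    congr 2
    · rw [show (2 * (π : ℂ) * I * ((n : ℂ) * z + ((u : ℂ) * z + ((v : ℂ) + 1)))) =
        2 * (π : ℂ) * I * ((n : ℂ) * z + ((u : ℂ) * z + (v : ℂ))) + 2 * π * I by ring,
        Complex.exp_add, Complex.exp_two_pi_mul_I, mul_one]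
    · rw [show (2 * (π : ℂ) * I * ((n : ℂ) * z - ((u : ℂ) * z + ((v : ℂ) + 1)))) =
        2 * (π : ℂ) * I * ((n : ℂ) * z - ((u : ℂ) * z + (v : ℂ))) + -(2 * π * I) by ring,
        Complex.exp_add, Complex.exp_neg, Complex.exp_two_pi_mul_I]
      norm_num
  rw [hprod,
    show ((π : ℂ) * I * u * (u * z + (v + 1))) = π * I * u * (u * z + v) + π * I * u by ring,
    show (-((π : ℂ) * I * (u * z + (v + 1)))) = -(π * I * (u * z + v)) + -(π * I) by ring,
    show ((π : ℂ) * I * (u * z + (v + 1))) = π * I * (u * z + v) + π * I by ring,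
    Complex.exp_add, Complex.exp_add, Complex.exp_add, Complex.exp_pi_mul_I,
    Complex.exp_neg (π * I), Complex.exp_pi_mul_I]
  norm_num
  ring
end

section
/- For all u, v ∈ ℝ and all z in the complex upper half-plane, the Siegel phi-function satisfies φ(u+1, v, z) = −e^{−πiv}·φ(u, v, z). -/
open Complex Real

/-!
Write `γ = u·z + v`, `s = e^{πiγ}` and `t = e^{πiz}`, so that `φ` is `-i·e^{πiz/6}·e^{πiuγ}`
times `(s - s⁻¹)·∏_{n≥1}(1 - s²t^{2n})(1 - s⁻²t^{2n})`. Replacing `u` by `u + 1` replaces `γ` by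
`γ + z`, i.e. `s` by `s·t`; this shifts the two families of factors of the product by one index in
opposite directions, so the product changes only by the boundary factors `(1 - s⁻²)/(1 - s²t²)`.
Combined with the change of the prefactor `e^{πiuγ}` this gives exactly `-e^{-πiv}`.
-/

section ShiftedProduct

variable {R : Type*} [NormedCommRing R] [NormOneClass R] [CompleteSpace R]

lemma multipliable_one_sub_mul_pow (c : R) {w : R} (hw : ‖w‖ < 1) :
    Multipliable fun n : ℕ => 1 - c * w ^ n := by
  have hgeo : Summable fun n : ℕ => ‖c‖ * ‖w‖ ^ n :=
    (summable_geometric_of_lt_one (norm_nonneg w) hw).mul_left ‖c‖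
  have hnorm : Summable fun n : ℕ => ‖-(c * w ^ n)‖ :=
    hgeo.of_nonneg_of_le (fun _ => norm_nonneg _) fun n => by
      rw [norm_neg]; exact (norm_mul_le _ _).trans (by gcongr; exact norm_pow_le _ _)
  simpa [sub_eq_add_neg] using multipliable_one_add_of_summable hnorm

/-- Both sides are the same convergent product, with the factor of index `0` split off from a
different family. -/
lemma one_sub_mul_tprod_shift (a b : R) {w : R} (hw : ‖w‖ < 1) :
    (1 - a * w) * ∏' n : ℕ, (1 - a * w ^ (n + 2)) * (1 - b * w ^ n) =
      (1 - b) * ∏' n : ℕ, (1 - a * w ^ (n + 1)) * (1 - b * w ^ (n + 1)) := by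
  have shifted (c : R) (k : ℕ) : Multipliable fun n : ℕ => 1 - c * w ^ (n + k) :=
    (multipliable_one_sub_mul_pow (c * w ^ k) hw).congr fun n => by ring
  rw [(shifted a 2).tprod_mul (multipliable_one_sub_mul_pow b hw),
    (shifted a 1).tprod_mul (shifted b 1),
    tprod_eq_zero_mul' (f := fun n => 1 - b * w ^ n) (shifted b 1),
    tprod_eq_zero_mul' (f := fun n => 1 - a * w ^ (n + 1)) (shifted a 2)]
  simp only [pow_zero, mul_one, zero_add, add_assoc, one_add_one_eq_two]
  ring

end ShiftedProduct

noncomputable def thetaProd (x q : ℂ) : ℂ :=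
  ∏' n : ℕ, (1 - x * q ^ (n + 1)) * (1 - x⁻¹ * q ^ (n + 1))

lemma one_sub_mul_thetaProd_mul_right (x : ℂ) {q : ℂ} (hq0 : q ≠ 0) (hq : ‖q‖ < 1) :
    (1 - x * q) * thetaProd (x * q) q = (1 - x⁻¹) * thetaProd x q := by
  have hinv (n : ℕ) : (x * q)⁻¹ * q ^ (n + 1) = x⁻¹ * q ^ n := by
    rw [mul_inv, pow_succ', ← mul_assoc, inv_mul_cancel_right₀ hq0]
  have hshift (n : ℕ) : x * q * q ^ (n + 1) = x * q ^ (n + 2) := by ring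
  simp only [thetaProd, hinv, hshift]
  exact one_sub_mul_tprod_shift x x⁻¹ hq

/-- Jacobi's triple product for `θ₁`, up to a factor depending only on `t`. -/
noncomputable def oddThetaProd (s t : ℂ) : ℂ :=
  (s - s⁻¹) * thetaProd (s ^ 2) (t ^ 2)

lemma oddThetaProd_mul_right {s t : ℂ} (hs : s ≠ 0) (ht : t ≠ 0) (ht1 : ‖t‖ < 1) :
    s ^ 2 * t * oddThetaProd (s * t) t = -oddThetaProd s t := by
  have hθ := one_sub_mul_thetaProd_mul_right (s ^ 2) (pow_ne_zero 2 ht)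
    (by rw [norm_pow]; exact pow_lt_one₀ (norm_nonneg t) ht1 two_ne_zero)
  have hleft : s ^ 2 * t * (s * t - (s * t)⁻¹) = -s * (1 - s ^ 2 * t ^ 2) := by
    field_simp; ring
  have hright : s - s⁻¹ = s * (1 - (s ^ 2)⁻¹) := by
    field_simp
  unfold oddThetaProd
  rw [mul_pow]
  linear_combination thetaProd (s ^ 2 * t ^ 2) (t ^ 2) * hleft - s * hθ +
    thetaProd (s ^ 2) (t ^ 2) * hright

lemma siegelPhi_eq_oddThetaProd (u v : ℝ) (z : ℂ) :
    siegelPhi u v z = -I * cexp (π * I * z / 6) * cexp (π * I * u * (u * z + v)) *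
      oddThetaProd (cexp (π * I * (u * z + v))) (cexp (π * I * z)) := by
  rw [siegelPhi, oddThetaProd, ← Complex.exp_neg, mul_assoc _ (_ - _)]
  set γ : ℂ := u * z + v
  rw [tprod_pnat_eq_tprod_succ (f := fun n : ℕ =>
    (1 - cexp (2 * π * I * (n * z + γ))) * (1 - cexp (2 * π * I * (n * z - γ))))]
  congr 2
  refine tprod_congr fun n => ?_
  simp only [← Complex.exp_nat_mul, ← Complex.exp_neg, ← Complex.exp_add]
  congr 3 <;> push_cast <;> ring

lemma norm_cexp_pi_mul_I_lt_one {z : ℂ} (hz : 0 < z.im) : ‖cexp (π * I * z)‖ < 1 := by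
  rw [Complex.norm_exp, Real.exp_lt_one_iff]
  simpa [Complex.mul_re] using mul_pos pi_pos hz

/-- `φ(u+1, v, z) = -e^{-πiv}·φ(u, v, z)`. -/
theorem siegelPhi_u_add_one (u v : ℝ) (z : ℂ) (hz : 0 < z.im) :
    siegelPhi (u + 1) v z = -Complex.exp (-((π : ℂ) * I * (v : ℂ))) * siegelPhi u v z := by
  have hshift : cexp (π * I * ((u + 1 : ℝ) * z + v)) =
      cexp (π * I * (u * z + v)) * cexp (π * I * z) := by
    rw [← Complex.exp_add]; congr 1; push_cast; ring
  have hprefactor : cexp (π * I * (u + 1 : ℝ) * ((u + 1 : ℝ) * z + v)) =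
      cexp (-(π * I * v)) * cexp (π * I * u * (u * z + v)) *
        (cexp (π * I * (u * z + v)) ^ 2 * cexp (π * I * z)) := by
    rw [sq]; simp only [← Complex.exp_add]; congr 1; push_cast; ring
  have hθ := oddThetaProd_mul_right (Complex.exp_ne_zero (π * I * (u * z + v)))
    (Complex.exp_ne_zero (π * I * z)) (norm_cexp_pi_mul_I_lt_one hz)
  rw [siegelPhi_eq_oddThetaProd, siegelPhi_eq_oddThetaProd, hshift, hprefactor]
  linear_combination (-I * cexp (π * I * z / 6) * cexp (-(π * I * v)) *
    cexp (π * I * u * (u * z + v))) * hθ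
end

section
/- For all u, v ∈ ℝ and all z in the complex upper half-plane, the Siegel phi-function satisfies φ(u, v, z+1) = e^{πi/6}·φ(u, u+v, z). -/
open Complex Real

/-- `φ(u, v, z+1) = e^{πi/6}·φ(u, u+v, z)`. -/
theorem siegelPhi_z_add_one (u v : ℝ) (z : ℂ) (hz : 0 < z.im) :
    siegelPhi u v (z + 1) = Complex.exp ((π : ℂ) * I / 6) * siegelPhi u (u + v) z := by
  unfold siegelPhi
  have hγ : (u : ℂ) * (z + 1) + (v : ℂ) = (u : ℂ) * z + ((u : ℝ) + v : ℝ) := by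
    push_cast; ring
  rw [hγ]
  have hexp6 : Complex.exp ((π : ℂ) * I * (z + 1) / 6) =
      Complex.exp ((π : ℂ) * I / 6) * Complex.exp ((π : ℂ) * I * z / 6) := by
    rw [← Complex.exp_add]; ring_nf
  have hprod : (∏' n : ℕ+,
      (1 - Complex.exp (2 * (π : ℂ) * I * ((n : ℂ) * (z + 1) + ((u : ℂ) * z + ((u : ℝ) + v : ℝ))))) *
      (1 - Complex.exp (2 * (π : ℂ) * I * ((n : ℂ) * (z + 1) - ((u : ℂ) * z + ((u : ℝ) + v : ℝ)))))) =
      ∏' n : ℕ+,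
      (1 - Complex.exp (2 * (π : ℂ) * I * ((n : ℂ) * z + ((u : ℂ) * z + ((u : ℝ) + v : ℝ))))) *
      (1 - Complex.exp (2 * (π : ℂ) * I * ((n : ℂ) * z - ((u : ℂ) * z + ((u : ℝ) + v : ℝ))))) := by
    apply tprod_congr
    intro n
    have key : ∀ w : ℂ, Complex.exp (2 * (π : ℂ) * I * ((n : ℂ) * (z + 1) + w)) =
        Complex.exp (2 * (π : ℂ) * I * ((n : ℂ) * z + w)) := by
      intro w
      have : 2 * (π : ℂ) * I * ((n : ℂ) * (z + 1) + w) =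
          2 * (π : ℂ) * I * ((n : ℂ) * z + w) + (n : ℤ) * (2 * (π : ℂ) * I) := by
        push_cast; ring
      rw [this, Complex.exp_add, Complex.exp_int_mul_two_pi_mul_I, mul_one]
    have h1 := key ((u : ℂ) * z + ((u : ℝ) + v : ℝ))
    have h2 := key (-((u : ℂ) * z + ((u : ℝ) + v : ℝ)))
    rw [show (n : ℂ) * (z + 1) - ((u : ℂ) * z + ((u : ℝ) + v : ℝ)) =
        (n : ℂ) * (z + 1) + -((u : ℂ) * z + ((u : ℝ) + v : ℝ)) by ring,
      show (n : ℂ) * z - ((u : ℂ) * z + ((u : ℝ) + v : ℝ)) =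
        (n : ℂ) * z + -((u : ℂ) * z + ((u : ℝ) + v : ℝ)) by ring, h1, h2]
  rw [hexp6, hprod]
  ring
end

section
/- For fixed u, v ∈ ℝ, the function z ↦ φ(u, v, z) (the Siegel phi-function in its third argument) is holomorphic on the open upper half-plane {z ∈ ℂ : Im z > 0}. -/
open Complex Real

/-!
The prefactor of `φ` is entire, so everything rests on the product. On a half-plane
`Im z > c > 0`, once `n ≥ |u|` both `e^{2πi(nz ± γ)}` have modulus at most `e^{-2πc(n-|u|)}`,
so the `n`-th factor differs from `1` by a summable amount uniformly there. The product thus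
converges locally uniformly, and a locally uniform limit of holomorphic functions is holomorphic.
-/

open Filter

noncomputable def siegelFactor (u v : ℝ) (n : ℕ) (z : ℂ) : ℂ :=
  (1 - cexp (2 * π * I * (n * z + (u * z + v)))) *
    (1 - cexp (2 * π * I * (n * z - (u * z + v))))

lemma differentiableOn_tprod_one_add {ι : Type*} {f : ι → ℂ → ℂ} {u : ι → ℝ} {U : Set ℂ}
    (hU : IsOpen U) (hu : Summable u) (h : ∀ᶠ i in cofinite, ∀ z ∈ U, ‖f i z‖ ≤ u i)
    (hf : ∀ i, DifferentiableOn ℂ (f i) U) :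
    DifferentiableOn ℂ (fun z ↦ ∏' i, (1 + f i z)) U :=
  (hu.hasProdLocallyUniformlyOn_one_add hU h fun i ↦ (hf i).continuousOn).differentiableOn
    (.of_forall fun s ↦ by simpa [Finset.prod_fn] using
      DifferentiableOn.finsetProd fun i _ ↦ (hf i).const_add 1) hU

lemma norm_cexp_two_pi_I_mul_le {s A c : ℝ} (t : ℝ) {z : ℂ} (hA : 0 ≤ A) (hAs : A ≤ s)
    (hc : 0 ≤ c) (hz : c ≤ z.im) :
    ‖cexp (2 * π * I * (s * z + t))‖ ≤ Real.exp (-(2 * π * (A * c))) := by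
  have hre : (2 * π * I * (s * z + t)).re = -(2 * π * (s * z.im)) := by
    simp [Complex.mul_re, Complex.mul_im]
  rw [Complex.norm_exp, Real.exp_le_exp, hre, neg_le_neg_iff]
  gcongr
  exact hA.trans hAs

lemma norm_one_sub_mul_one_sub_sub_one_le {a b : ℂ} {r : ℝ} (ha : ‖a‖ ≤ r) (hb : ‖b‖ ≤ r)
    (hr : r ≤ 1) : ‖(1 - a) * (1 - b) - 1‖ ≤ 3 * r := by
  have hr0 : 0 ≤ r := (norm_nonneg a).trans ha
  calc ‖(1 - a) * (1 - b) - 1‖ = ‖a * b - (a + b)‖ := by ring_nf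
    _ ≤ ‖a‖ * ‖b‖ + (‖a‖ + ‖b‖) :=
      (norm_sub_le _ _).trans (add_le_add (norm_mul_le _ _) (norm_add_le _ _))
    _ ≤ r * r + (r + r) := by gcongr
    _ ≤ 3 * r := by nlinarith

lemma norm_siegelFactor_sub_one_le {u v c : ℝ} {n : ℕ} {z : ℂ} (hn : |u| ≤ n) (hc : 0 ≤ c)
    (hz : c ≤ z.im) :
    ‖siegelFactor u v n z - 1‖ ≤ 3 * Real.exp (-(2 * π * ((n - |u|) * c))) := by
  have hn' : 0 ≤ (n : ℝ) - |u| := sub_nonneg.mpr hn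
  refine norm_one_sub_mul_one_sub_sub_one_le ?_ ?_
    (Real.exp_le_one_iff.mpr (neg_nonpos.mpr (mul_nonneg two_pi_pos.le (mul_nonneg hn' hc))))
  · convert norm_cexp_two_pi_I_mul_le (s := n + u) v hn' (by linarith [neg_abs_le u]) hc hz
      using 4
    push_cast; ring
  · convert norm_cexp_two_pi_I_mul_le (s := n - u) (-v) hn' (by linarith [le_abs_self u]) hc hz
      using 4
    push_cast; ring

lemma summable_exp_neg_two_pi_mul {c : ℝ} (hc : 0 < c) (a : ℝ) :
    Summable fun n : ℕ+ ↦ Real.exp (-(2 * π * (((n : ℕ) - a) * c))) := by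
  have hgeom :
      Summable fun n : ℕ ↦ Real.exp (2 * π * (a - 1) * c) * Real.exp (n * -(2 * π * c)) :=
    (Real.summable_exp_nat_mul_iff.mpr (by simp [pi_pos, hc])).mul_left _
  refine (summable_pnat_iff_summable_succ
    (f := fun n : ℕ ↦ Real.exp (-(2 * π * ((n - a) * c))))).mpr (hgeom.congr fun n ↦ ?_)
  rw [← Real.exp_add]
  push_cast
  ring_nf

lemma differentiableOn_tprod_siegelFactor (u v : ℝ) :
    DifferentiableOn ℂ (fun z ↦ ∏' n : ℕ+, siegelFactor u v n z) {z | 0 < z.im} := by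
  refine differentiableOn_of_locally_differentiableOn fun z₀ hz₀ ↦
    ⟨{z | z₀.im / 2 < z.im}, isOpen_lt continuous_const continuous_im,
      show z₀.im / 2 < z₀.im from half_lt_self hz₀, ?_⟩
  have hc : 0 < z₀.im / 2 := half_pos hz₀
  have hlarge : ∀ᶠ n : ℕ+ in cofinite, |u| ≤ (n : ℕ) :=
    (tendsto_natCast_atTop_atTop.comp
      (Nat.cofinite_eq_atTop ▸ PNat.coe_injective.tendsto_cofinite)).eventually_ge_atTop _
  have hprod :=
    differentiableOn_tprod_one_add (f := fun (n : ℕ+) z ↦ siegelFactor u v n z - 1)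
      (isOpen_lt continuous_const continuous_im) ((summable_exp_neg_two_pi_mul hc |u|).mul_left 3)
      (hlarge.mono fun n hn z hz ↦ norm_siegelFactor_sub_one_le hn hc.le hz.le)
      fun n ↦ by unfold siegelFactor; fun_prop
  simp only [add_sub_cancel] at hprod
  exact hprod.mono Set.inter_subset_right

/-- For fixed `u v : ℝ`, `z ↦ φ(u,v,z)` is holomorphic on the open upper half-plane. -/
theorem siegelPhi_differentiableOn (u v : ℝ) :
    DifferentiableOn ℂ (fun z : ℂ => siegelPhi u v z) {z : ℂ | 0 < z.im} := by
  unfold siegelPhi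
  exact (Differentiable.differentiableOn (by fun_prop)).mul
    (differentiableOn_tprod_siegelFactor u v)
end

section
/- Let u, v ∈ ℝ be such that not both u and v are integers. Then for every z in the complex upper half-plane, φ(u, v, z) ≠ 0. -/
open Complex Real

/-!
The factor `e^{πiγ} - e^{-πiγ}` and every factor `1 - e^{2πi(nz ± γ)}` vanishes only when
`γ + m z` is an integer for some integer `m`; comparing imaginary and real parts, this forces
`u = -m` and `v` to be an integer. The infinite product does not vanish either, because its
factors are nonzero and `|e^{2πi(nz ± γ)}|` decays geometrically in `n`.
-/

namespace Complex

lemma exists_int_eq_of_cexp_two_pi_I_mul_eq_one {w : ℂ} (h : cexp (2 * π * I * w) = 1) :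
    ∃ k : ℤ, w = k := by
  obtain ⟨k, hk⟩ := exp_eq_one_iff.mp h
  exact ⟨k, mul_left_cancel₀ two_pi_I_ne_zero (by linear_combination hk)⟩

lemma exists_int_eq_of_cexp_pi_I_mul_eq_cexp_neg {w : ℂ}
    (h : cexp (π * I * w) = cexp (-(π * I * w))) : ∃ k : ℤ, w = k := by
  obtain ⟨k, hk⟩ := exp_eq_exp_iff_exists_int.mp h
  exact ⟨k, mul_left_cancel₀ two_pi_I_ne_zero (by linear_combination hk)⟩

lemma summable_norm_cexp_two_pi_I_mul_pnat_mul_add {z : ℂ} (hz : 0 < z.im) (w : ℂ) :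
    Summable fun n : ℕ+ => ‖cexp (2 * π * I * (n * z + w))‖ := by
  have hq : ‖cexp (2 * π * I * z)‖ < 1 := by
    rw [norm_exp, Real.exp_lt_one_iff]
    simpa using mul_pos two_pi_pos hz
  have hgeom : ∀ n : ℕ+,
      cexp (2 * π * I * (n * z + w)) = cexp (2 * π * I * w) * cexp (2 * π * I * z) ^ (n : ℕ) := by
    intro n
    rw [← exp_nat_mul, ← exp_add]
    ring_nf
  simp_rw [hgeom, norm_mul, norm_pow]
  exact ((summable_geometric_of_lt_one (norm_nonneg _) hq).mul_left _).comp_injective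
    PNat.coe_injective

lemma multipliable_one_sub_cexp_two_pi_I_mul_pnat_mul_add {z : ℂ} (hz : 0 < z.im) (w : ℂ) :
    Multipliable fun n : ℕ+ => 1 - cexp (2 * π * I * (n * z + w)) := by
  simp_rw [sub_eq_add_neg]
  exact multipliable_one_add_of_summable
    (by simpa only [norm_neg] using summable_norm_cexp_two_pi_I_mul_pnat_mul_add hz w)

lemma tprod_one_sub_cexp_two_pi_I_mul_pnat_mul_add_ne_zero {z : ℂ} (hz : 0 < z.im) (w : ℂ)
    (h : ∀ n : ℕ+, cexp (2 * π * I * (n * z + w)) ≠ 1) :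
    ∏' n : ℕ+, (1 - cexp (2 * π * I * (n * z + w))) ≠ 0 := by
  simp_rw [sub_eq_add_neg]
  refine tprod_one_add_ne_zero_of_summable (fun n => ?_) ?_
  · rw [← sub_eq_add_neg]
    exact sub_ne_zero.mpr (h n).symm
  · simpa only [norm_neg] using summable_norm_cexp_two_pi_I_mul_pnat_mul_add hz w

lemma tprod_one_sub_cexp_mul_one_sub_cexp_ne_zero {z : ℂ} (hz : 0 < z.im) (γ : ℂ)
    (hadd : ∀ n : ℕ+, cexp (2 * π * I * (n * z + γ)) ≠ 1)
    (hsub : ∀ n : ℕ+, cexp (2 * π * I * (n * z - γ)) ≠ 1) :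
    ∏' n : ℕ+, (1 - cexp (2 * π * I * (n * z + γ))) * (1 - cexp (2 * π * I * (n * z - γ))) ≠ 0 := by
  simp only [sub_eq_add_neg _ γ] at hsub ⊢
  rw [(multipliable_one_sub_cexp_two_pi_I_mul_pnat_mul_add hz γ).tprod_mul
    (multipliable_one_sub_cexp_two_pi_I_mul_pnat_mul_add hz (-γ))]
  exact mul_ne_zero (tprod_one_sub_cexp_two_pi_I_mul_pnat_mul_add_ne_zero hz γ hadd)
    (tprod_one_sub_cexp_two_pi_I_mul_pnat_mul_add_ne_zero hz (-γ) hsub)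

end Complex

lemma int_mul_add_real_mul_add_real_ne_int {z : ℂ} (hz : z.im ≠ 0) {u v : ℝ}
    (huv : ¬((∃ m : ℤ, u = m) ∧ ∃ n : ℤ, v = n)) (m k : ℤ) :
    (m : ℂ) * z + (u * z + v) ≠ k := by
  intro h
  have him := congrArg im h
  have hre := congrArg re h
  simp only [add_im, mul_im, add_re, mul_re, intCast_re, intCast_im, ofReal_re, ofReal_im,
    zero_mul, sub_zero, add_zero] at him hre
  have hu : u = -m := by
    have : ((m : ℝ) + u) * z.im = 0 := by linarith
    linarith [(mul_eq_zero.mp this).resolve_right hz]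
  refine huv ⟨⟨-m, by push_cast; exact hu⟩, ⟨k, ?_⟩⟩
  rw [hu] at hre
  linarith

/-- If not both `u` and `v` are integers, then `φ(u,v,z) ≠ 0` on the upper half-plane. -/
theorem siegelPhi_ne_zero (u v : ℝ)
    (huv : ¬ ((∃ m : ℤ, u = (m : ℝ)) ∧ (∃ n : ℤ, v = (n : ℝ)))) (z : ℂ) (hz : 0 < z.im) :
    siegelPhi u v z ≠ 0 := by
  have hγ := int_mul_add_real_mul_add_real_ne_int hz.ne' huv
  have hsinh : cexp (π * I * (u * z + v)) - cexp (-(π * I * (u * z + v))) ≠ 0 := by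
    intro h
    obtain ⟨k, hk⟩ := exists_int_eq_of_cexp_pi_I_mul_eq_cexp_neg (sub_eq_zero.mp h)
    exact hγ 0 k (by simpa using hk)
  have hadd : ∀ n : ℕ+, cexp (2 * π * I * (n * z + (u * z + v))) ≠ 1 := by
    intro n h
    obtain ⟨k, hk⟩ := exists_int_eq_of_cexp_two_pi_I_mul_eq_one h
    exact hγ n k (by exact_mod_cast hk)
  have hsub : ∀ n : ℕ+, cexp (2 * π * I * (n * z - (u * z + v))) ≠ 1 := by
    intro n h
    obtain ⟨k, hk⟩ := exists_int_eq_of_cexp_two_pi_I_mul_eq_one h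
    exact hγ (-n) (-k) (by push_cast; linear_combination -hk)
  unfold siegelPhi
  refine mul_ne_zero ?_ (tprod_one_sub_cexp_mul_one_sub_cexp_ne_zero hz _ hadd hsub)
  exact mul_ne_zero (mul_ne_zero (mul_ne_zero (by simp) (exp_ne_zero _)) (exp_ne_zero _)) hsinh
end
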